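/- Let n ≥ 1, 0 < p < ∞, 0 < q ≤ ∞, and let (μ_k)_{k∈ℤ} be a nonnegative sequence with (2^k μ_k)_{k∈ℤ} ∈ ℓ^q(ℤ). Let φ : ℝⁿ → [0,∞) be measurable and suppose there exist ε ∈ (0,1) and c > 0 such that for every integer k₀ there are nonnegative measurable functions ψ_{k₀} and η_{k₀} with φ ≤ ψ_{k₀} + η_{k₀} pointwise, m(ψ_{k₀}, 2^{k₀})^{1/p} ≤ c · μ_{k₀}, and 2^{k₀ ε p} · m(η_{k₀}, 2^{k₀}) ≤ c · Σ_{k ≥ k₀} (2^{kε} μ_k)^p. Then φ ∈ L^{p,q}, and there is a constant C, depending only on n, p, q, c, ε, such that ‖φ‖_{p,q} ≤ C · ‖(2^k μ_k)_k‖_{ℓ^q(ℤ)}. -/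

import Mathlib

open MeasureTheory ENNReal Set

noncomputable section

abbrev Euc (n : ℕ) := EuclideanSpace ℝ (Fin n)

/-- Distribution function `m(F, lam) = |{x : lam < F x}|` (Lebesgue measure). -/
def distFn {n : ℕ} (F : Euc n → ℝ≥0∞) (lam : ℝ≥0∞) : ℝ≥0∞ :=
  volume {x | lam < F x}

/-- View a real-valued function as an `ℝ≥0∞`-valued one via its absolute value. -/
def eF {n : ℕ} (g : Euc n → ℝ) : Euc n → ℝ≥0∞ :=
  fun x => ENNReal.ofReal |g x|

/-- Dyadic Lorentz `L^{p,q}` quasinorm. -/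
def lorentzNorm {n : ℕ} (p : ℝ) (q : ℝ≥0∞) (F : Euc n → ℝ≥0∞) : ℝ≥0∞ :=
  if q = ∞ then ⨆ k : ℤ, (2 : ℝ≥0∞) ^ k * (distFn F ((2 : ℝ≥0∞) ^ k)) ^ (1/p)
  else (∑' k : ℤ, ((2 : ℝ≥0∞) ^ k * (distFn F ((2 : ℝ≥0∞) ^ k)) ^ (1/p)) ^ q.toReal) ^ (1/q.toReal)

/-- `ℓ^q(ℤ)` norm of a nonnegative sequence. -/
def ellq (q : ℝ≥0∞) (a : ℤ → ℝ≥0∞) : ℝ≥0∞ :=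
  if q = ∞ then ⨆ k : ℤ, a k else (∑' k : ℤ, (a k) ^ q.toReal) ^ (1/q.toReal)

/-- The axis-parallel closed cube centered at `c` with half side-length `r`. -/
def cube {n : ℕ} (c : Euc n) (r : ℝ) : Set (Euc n) := {y | ∀ i, |y i - c i| ≤ r}

/-- `H^p` atom with defining cube `cube c r`; `|cube c r| = (2r)^n`. -/
def IsHpAtom {n : ℕ} (p : ℝ) (a : Euc n → ℝ) (c : Euc n) (r : ℝ) : Prop :=
  0 < r ∧ Measurable a ∧ (∀ x, x ∉ cube c r → a x = 0) ∧
    (∀ᵐ x ∂(volume : Measure (Euc n)), |a x| ≤ ((((2*r)^n : ℝ)) ^ (1/p))⁻¹) ∧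
    ∀ α : Fin n → ℕ, (∑ i, α i) ≤ ⌊(n : ℝ) * (1/p - 1)⌋₊ →
      (∫ y : Euc n, (∏ i, y i ^ α i) * a y) = 0

/-- `(f * ψ_t)(y)` where `ψ_t(x) = t⁻ⁿ ψ(x/t)`. -/
def convAt {n : ℕ} (ψ f : Euc n → ℝ) (t : ℝ) (y : Euc n) : ℝ :=
  ∫ z : Euc n, f z * ((t ^ n)⁻¹ * ψ (t⁻¹ • (y - z)))

/-- Non-tangential maximal function. -/
def ntMax {n : ℕ} (ψ f : Euc n → ℝ) (x : Euc n) : ℝ≥0∞ :=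
  ⨆ (y : Euc n) (t : ℝ) (_ : 0 < t) (_ : dist x y < t), ENNReal.ofReal |convAt ψ f t y|

/-- Radial maximal function. -/
def radMax {n : ℕ} (φ f : Euc n → ℝ) (x : Euc n) : ℝ≥0∞ :=
  ⨆ (t : ℝ) (_ : 0 < t), ENNReal.ofReal |convAt φ f t x|

/-!
Fix `k` and use the decomposition `φ ≤ ψ + η` given for `k₀ = k`. Since
`{φ > 2^(k+1)} ⊆ {ψ > 2^k} ∪ {η > 2^k}`, writing `a_k = 2^k μ_k` the hypotheses give
`2^((k+1)p) m(φ, 2^(k+1)) ≤ 2^p (c^p a_k^p + c ∑_{j ≥ 0} 2^(-j(1-ε)p) a_(k+j)^p)`.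
Splitting `2^(-j(1-ε)) = r^j r^j` with `r = 2^(-(1-ε)/2) < 1` bounds the right-hand side by a
constant times `(sup_j r^j a_(k+j))^p`, and the `ℓ^q` norm of `k ↦ sup_j r^j a_(k+j)` is at most a
constant times that of `a`: for `q < ∞` bound the supremum by the sum and interchange the sums.
-/

section ellq

variable {q : ℝ≥0∞}

lemma ellq_mono {f g : ℤ → ℝ≥0∞} (h : ∀ k, f k ≤ g k) : ellq q f ≤ ellq q g := by
  unfold ellq
  split_ifs
  · exact iSup_mono h
  · gcongr with k
    exact h k

lemma ellq_comp_add_right (f : ℤ → ℝ≥0∞) (j : ℤ) :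
    ellq q (fun k => f (k + j)) = ellq q f := by
  unfold ellq
  split_ifs
  · exact (Equiv.addRight j).iSup_comp (g := f)
  · exact congrArg (· ^ (1 / q.toReal)) ((Equiv.addRight j).tsum_eq (fun k => f k ^ q.toReal))

lemma ellq_const_mul (hq : q ≠ 0) (K : ℝ≥0∞) (f : ℤ → ℝ≥0∞) :
    ellq q (fun k => K * f k) = K * ellq q f := by
  unfold ellq
  split_ifs with hq_top
  · exact (ENNReal.mul_iSup K f).symm
  · have ht : 0 < q.toReal := ENNReal.toReal_pos hq hq_top
    simp_rw [ENNReal.mul_rpow_of_nonneg _ _ ht.le]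
    rw [ENNReal.tsum_mul_left, ENNReal.mul_rpow_of_nonneg _ _ (by positivity),
      ← ENNReal.rpow_mul, mul_one_div_cancel ht.ne', ENNReal.rpow_one]

end ellq

def tailSup (r : ℝ≥0∞) (a : ℤ → ℝ≥0∞) (k : ℤ) : ℝ≥0∞ := ⨆ j : ℕ, r ^ j * a (k + j)

section tailSup

variable {r : ℝ≥0∞} {a : ℤ → ℝ≥0∞}

lemma le_tailSup (k : ℤ) (j : ℕ) : r ^ j * a (k + j) ≤ tailSup r a k :=
  le_iSup (fun j : ℕ => r ^ j * a (k + j)) j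

lemma tailSup_rpow_le_tsum {t : ℝ} (ht : 0 < t) (k : ℤ) :
    tailSup r a k ^ t ≤ ∑' j : ℕ, (r ^ t) ^ j * a (k + j) ^ t := by
  rw [← ENNReal.le_rpow_inv_iff ht]
  refine iSup_le fun j => ?_
  rw [ENNReal.le_rpow_inv_iff ht]
  calc (r ^ j * a (k + j)) ^ t = (r ^ t) ^ j * a (k + j) ^ t := by
        rw [ENNReal.mul_rpow_of_nonneg _ _ ht.le, ← ENNReal.rpow_natCast, ← ENNReal.rpow_mul,
          ← ENNReal.rpow_natCast, ← ENNReal.rpow_mul, mul_comm t]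
    _ ≤ _ := ENNReal.le_tsum j

lemma tsum_mul_rpow_le_tailSup_rpow {p : ℝ} (hp : 0 ≤ p) (k : ℤ) :
    ∑' j : ℕ, (r ^ p) ^ j * (r ^ j * a (k + j)) ^ p ≤
      (∑' j : ℕ, (r ^ p) ^ j) * tailSup r a k ^ p := by
  rw [← ENNReal.tsum_mul_right]
  gcongr with j
  exact le_tailSup k j

lemma tsum_tailSup_rpow_le {t : ℝ} (ht : 0 < t) :
    ∑' k : ℤ, tailSup r a k ^ t ≤ (∑' j : ℕ, (r ^ t) ^ j) * ∑' k : ℤ, a k ^ t :=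
  calc ∑' k : ℤ, tailSup r a k ^ t
      ≤ ∑' k : ℤ, ∑' j : ℕ, (r ^ t) ^ j * a (k + j) ^ t :=
        ENNReal.tsum_le_tsum fun k => tailSup_rpow_le_tsum ht k
    _ = ∑' j : ℕ, (r ^ t) ^ j * ∑' k : ℤ, a (k + j) ^ t := by
        rw [ENNReal.tsum_comm]
        simp_rw [ENNReal.tsum_mul_left]
    _ = (∑' j : ℕ, (r ^ t) ^ j) * ∑' k : ℤ, a k ^ t := by
        rw [← ENNReal.tsum_mul_right]
        exact tsum_congr fun j => congrArg _ ((Equiv.addRight (j : ℤ)).tsum_eq (fun k => a k ^ t))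

lemma ellq_tailSup_le {q : ℝ≥0∞} (hq : q ≠ 0) (hr : r < 1) :
    ∃ G ≠ ∞, ∀ a : ℤ → ℝ≥0∞, ellq q (tailSup r a) ≤ G * ellq q a := by
  by_cases hq_top : q = ∞
  · refine ⟨1, ENNReal.one_ne_top, fun a => ?_⟩
    simp only [ellq, hq_top, if_true, one_mul]
    refine iSup_le fun k => iSup_le fun j => ?_
    calc r ^ j * a (k + j) ≤ 1 * a (k + j) := by gcongr; exact pow_le_one₀ zero_le hr.le
      _ ≤ ⨆ k, a k := (one_mul _).trans_le (le_iSup a _)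
  · set t := q.toReal
    have ht : 0 < t := ENNReal.toReal_pos hq hq_top
    have hgeom : ∑' j : ℕ, (r ^ t) ^ j ≠ ∞ :=
      (tsum_geometric_lt_top.2 (ENNReal.rpow_lt_one hr ht)).ne
    refine ⟨(∑' j : ℕ, (r ^ t) ^ j) ^ (1 / t),
      ENNReal.rpow_ne_top_of_nonneg (by positivity) hgeom, fun a => ?_⟩
    simp only [ellq, hq_top, if_false]
    rw [← ENNReal.mul_rpow_of_nonneg _ _ (by positivity)]
    gcongr
    exact tsum_tailSup_rpow_le ht

end tailSup

lemma distFn_add_le {n : ℕ} {F G H : Euc n → ℝ≥0∞} (h : ∀ x, F x ≤ G x + H x) (lam : ℝ≥0∞) :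
    distFn F (lam + lam) ≤ distFn G lam + distFn H lam := by
  refine (measure_mono fun x hx => ?_).trans (measure_union_le _ _)
  by_contra hx'
  simp only [mem_union, mem_ofPred_eq, not_or, not_lt] at hx hx'
  exact ((h x).trans (add_le_add hx'.1 hx'.2)).not_gt hx

lemma eF_le_add {n : ℕ} {φ ψ η : Euc n → ℝ} (hφ : ∀ x, 0 ≤ φ x) (h : ∀ x, φ x ≤ ψ x + η x)
    (x : Euc n) : eF φ x ≤ eF ψ x + eF η x := by
  simp only [eF, abs_of_nonneg (hφ x)]
  calc ENNReal.ofReal (φ x) ≤ ENNReal.ofReal (|ψ x| + |η x|) :=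
        ENNReal.ofReal_le_ofReal ((h x).trans (add_le_add (le_abs_self _) (le_abs_self _)))
    _ ≤ _ := ENNReal.ofReal_add_le

lemma tsum_subtype_le_le_tsum_nat_add (f : ℤ → ℝ≥0∞) (k : ℤ) :
    ∑' x : {x : ℤ // k ≤ x}, f x ≤ ∑' i : ℕ, f (k + i) := by
  have hinj : Function.Injective fun x : {x : ℤ // k ≤ x} => (x - k).toNat := by
    intro x y hxy
    have := x.2
    have := y.2
    exact Subtype.ext (by simp only at hxy; omega)
  calc ∑' x : {x : ℤ // k ≤ x}, f x = ∑' x : {x : ℤ // k ≤ x}, f (k + (x - k).toNat) :=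
        tsum_congr fun x => congrArg f (by have := x.2; omega)
    _ ≤ _ := ENNReal.tsum_comp_le_tsum_of_injective hinj (fun i => f (k + i))

lemma ofReal_two_rpow (e : ℝ) : ENNReal.ofReal ((2 : ℝ) ^ e) = (2 : ℝ≥0∞) ^ e := by
  rw [← ENNReal.ofReal_rpow_of_pos two_pos, ENNReal.ofReal_ofNat]

lemma ofReal_two_rpow_mul {x : ℝ} (hx : 0 ≤ x) (e : ℝ) :
    ENNReal.ofReal ((2 : ℝ) ^ e * x) = (2 : ℝ≥0∞) ^ e * ENNReal.ofReal x := by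
  rw [ENNReal.ofReal_mul' hx, ofReal_two_rpow]

lemma two_rpow_mul_two_rpow (s t : ℝ) : (2 : ℝ≥0∞) ^ s * 2 ^ t = 2 ^ (s + t) :=
  (ENNReal.rpow_add _ _ two_ne_zero ENNReal.ofNat_ne_top).symm

lemma two_rpow_mul_ofReal_rpow_eq (ε : ℝ) {p x : ℝ} (hp : 0 ≤ p) (hx : 0 ≤ x) (k : ℤ) (i : ℕ) :
    (2 : ℝ≥0∞) ^ ((k : ℝ) * (1 - ε) * p) *
        ENNReal.ofReal (((2 : ℝ) ^ (((k + i : ℤ) : ℝ) * ε) * x) ^ p) =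
      (((2 : ℝ≥0∞) ^ (-(1 - ε) / 2)) ^ p) ^ i *
        (((2 : ℝ≥0∞) ^ (-(1 - ε) / 2)) ^ i * ENNReal.ofReal ((2 : ℝ) ^ (k + i : ℤ) * x)) ^ p := by
  rw [← ENNReal.ofReal_rpow_of_nonneg (by positivity) hp, ← Real.rpow_intCast,
    ofReal_two_rpow_mul hx, ofReal_two_rpow_mul hx]
  simp only [ENNReal.mul_rpow_of_nonneg _ _ hp, ← ENNReal.rpow_natCast, ← ENNReal.rpow_mul,
    ← mul_assoc, two_rpow_mul_two_rpow]
  congr 2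
  push_cast
  ring

section pointwise

variable {n : ℕ} {p ε c : ℝ} {μ : ℤ → ℝ} {k : ℤ}

lemma rpow_mul_distFn_le_of_distFn_rpow_le {ψ : Euc n → ℝ} (hp : 0 < p) (hμ : 0 ≤ μ k)
    (hψ : distFn (eF ψ) ((2 : ℝ≥0∞) ^ k) ^ (1 / p) ≤ ENNReal.ofReal (c * μ k)) :
    ((2 : ℝ≥0∞) ^ k) ^ p * distFn (eF ψ) ((2 : ℝ≥0∞) ^ k) ≤
      ENNReal.ofReal c ^ p * ENNReal.ofReal ((2 : ℝ) ^ k * μ k) ^ p := by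
  rw [one_div, ENNReal.rpow_inv_le_iff hp] at hψ
  calc ((2 : ℝ≥0∞) ^ k) ^ p * distFn (eF ψ) ((2 : ℝ≥0∞) ^ k)
      ≤ ((2 : ℝ≥0∞) ^ k) ^ p * ENNReal.ofReal (c * μ k) ^ p := by gcongr
    _ = _ := by
      rw [← ENNReal.mul_rpow_of_nonneg _ _ hp.le, ← ENNReal.mul_rpow_of_nonneg _ _ hp.le,
        ENNReal.ofReal_mul' hμ, ← Real.rpow_intCast, ofReal_two_rpow_mul hμ,
        ENNReal.rpow_intCast, mul_left_comm]

lemma rpow_mul_distFn_le_tailSup_rpow {η : Euc n → ℝ} (hp : 0 < p) (hμ : ∀ k, 0 ≤ μ k)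
    (hη : ENNReal.ofReal ((2 : ℝ) ^ ((k : ℝ) * ε * p)) * distFn (eF η) ((2 : ℝ≥0∞) ^ k) ≤
      ENNReal.ofReal c * ∑' x : {x : ℤ // k ≤ x},
        ENNReal.ofReal (((2 : ℝ) ^ (((x : ℤ) : ℝ) * ε) * μ (x : ℤ)) ^ p)) :
    ((2 : ℝ≥0∞) ^ k) ^ p * distFn (eF η) ((2 : ℝ≥0∞) ^ k) ≤
      ENNReal.ofReal c * (∑' j : ℕ, (((2 : ℝ≥0∞) ^ (-(1 - ε) / 2)) ^ p) ^ j) *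
        tailSup ((2 : ℝ≥0∞) ^ (-(1 - ε) / 2))
          (fun k => ENNReal.ofReal ((2 : ℝ) ^ k * μ k)) k ^ p := by
  set r : ℝ≥0∞ := 2 ^ (-(1 - ε) / 2)
  calc ((2 : ℝ≥0∞) ^ k) ^ p * distFn (eF η) ((2 : ℝ≥0∞) ^ k)
      = 2 ^ ((k : ℝ) * (1 - ε) * p) *
          (ENNReal.ofReal ((2 : ℝ) ^ ((k : ℝ) * ε * p)) * distFn (eF η) ((2 : ℝ≥0∞) ^ k)) := by
        rw [ofReal_two_rpow, ← mul_assoc, two_rpow_mul_two_rpow, ← ENNReal.rpow_intCast,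
          ← ENNReal.rpow_mul]
        ring_nf
    _ ≤ 2 ^ ((k : ℝ) * (1 - ε) * p) * (ENNReal.ofReal c * ∑' i : ℕ,
          ENNReal.ofReal (((2 : ℝ) ^ (((k + i : ℤ) : ℝ) * ε) * μ (k + i)) ^ p)) := by
        refine mul_le_mul_right (hη.trans (mul_le_mul_right ?_ _)) _
        exact tsum_subtype_le_le_tsum_nat_add
          (fun x => ENNReal.ofReal (((2 : ℝ) ^ ((x : ℝ) * ε) * μ x) ^ p)) k
    _ = ENNReal.ofReal c * ∑' i : ℕ, (r ^ p) ^ i *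
          (r ^ i * ENNReal.ofReal ((2 : ℝ) ^ (k + i : ℤ) * μ (k + i))) ^ p := by
        rw [mul_left_comm, ← ENNReal.tsum_mul_left]
        simp_rw [two_rpow_mul_ofReal_rpow_eq ε hp.le (hμ _)]
        rfl
    _ ≤ ENNReal.ofReal c * ((∑' j : ℕ, (r ^ p) ^ j) *
          tailSup r (fun k => ENNReal.ofReal ((2 : ℝ) ^ k * μ k)) k ^ p) := by
        gcongr
        exact tsum_mul_rpow_le_tailSup_rpow hp.le k
    _ = _ := (mul_assoc _ _ _).symm

lemma lorentz_term_succ_le {φ ψ η : Euc n → ℝ} (hp : 0 < p) (hμ : ∀ k, 0 ≤ μ k)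
    (hφ : ∀ x, 0 ≤ φ x) (hle : ∀ x, φ x ≤ ψ x + η x)
    (hψ : distFn (eF ψ) ((2 : ℝ≥0∞) ^ k) ^ (1 / p) ≤ ENNReal.ofReal (c * μ k))
    (hη : ENNReal.ofReal ((2 : ℝ) ^ ((k : ℝ) * ε * p)) * distFn (eF η) ((2 : ℝ≥0∞) ^ k) ≤
      ENNReal.ofReal c * ∑' x : {x : ℤ // k ≤ x},
        ENNReal.ofReal (((2 : ℝ) ^ (((x : ℤ) : ℝ) * ε) * μ (x : ℤ)) ^ p)) :
    (2 : ℝ≥0∞) ^ (k + 1) * distFn (eF φ) ((2 : ℝ≥0∞) ^ (k + 1)) ^ (1 / p) ≤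
      (2 ^ p * (ENNReal.ofReal c ^ p + ENNReal.ofReal c *
          ∑' j : ℕ, (((2 : ℝ≥0∞) ^ (-(1 - ε) / 2)) ^ p) ^ j)) ^ (1 / p) *
        tailSup ((2 : ℝ≥0∞) ^ (-(1 - ε) / 2)) (fun k => ENNReal.ofReal ((2 : ℝ) ^ k * μ k)) k := by
  set r : ℝ≥0∞ := 2 ^ (-(1 - ε) / 2)
  set a : ℤ → ℝ≥0∞ := fun k => ENNReal.ofReal ((2 : ℝ) ^ k * μ k)
  set G := ∑' j : ℕ, (r ^ p) ^ j
  have ha : a k ≤ tailSup r a k := by simpa using le_tailSup (r := r) (a := a) k 0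
  have h2k : (2 : ℝ≥0∞) ^ (k + 1) = 2 ^ k * 2 := by
    rw [ENNReal.zpow_add two_ne_zero ENNReal.ofNat_ne_top, zpow_one]
  have hsplit : distFn (eF φ) ((2 : ℝ≥0∞) ^ (k + 1)) ≤
      distFn (eF ψ) ((2 : ℝ≥0∞) ^ k) + distFn (eF η) ((2 : ℝ≥0∞) ^ k) := by
    rw [h2k, mul_two]
    exact distFn_add_le (eF_le_add hφ hle) _
  have hpow : ((2 : ℝ≥0∞) ^ (k + 1)) ^ p * distFn (eF φ) ((2 : ℝ≥0∞) ^ (k + 1)) ≤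
      2 ^ p * (ENNReal.ofReal c ^ p + ENNReal.ofReal c * G) * tailSup r a k ^ p :=
    calc ((2 : ℝ≥0∞) ^ (k + 1)) ^ p * distFn (eF φ) ((2 : ℝ≥0∞) ^ (k + 1))
        ≤ 2 ^ p * (((2 : ℝ≥0∞) ^ k) ^ p * distFn (eF ψ) ((2 : ℝ≥0∞) ^ k) +
            ((2 : ℝ≥0∞) ^ k) ^ p * distFn (eF η) ((2 : ℝ≥0∞) ^ k)) := by
          refine (mul_le_mul_right hsplit _).trans_eq ?_
          rw [h2k, ENNReal.mul_rpow_of_nonneg _ _ hp.le]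
          ring
      _ ≤ 2 ^ p * (ENNReal.ofReal c ^ p * tailSup r a k ^ p +
            ENNReal.ofReal c * G * tailSup r a k ^ p) := by
          refine mul_le_mul_right (add_le_add ?_ (rpow_mul_distFn_le_tailSup_rpow hp hμ hη)) _
          exact (rpow_mul_distFn_le_of_distFn_rpow_le hp (hμ k) hψ).trans (by gcongr)
      _ = _ := by ring
  calc (2 : ℝ≥0∞) ^ (k + 1) * distFn (eF φ) ((2 : ℝ≥0∞) ^ (k + 1)) ^ (1 / p)
      = (((2 : ℝ≥0∞) ^ (k + 1)) ^ p * distFn (eF φ) ((2 : ℝ≥0∞) ^ (k + 1))) ^ (1 / p) := by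
        rw [ENNReal.mul_rpow_of_nonneg _ _ (by positivity), ← ENNReal.rpow_mul,
          mul_one_div_cancel hp.ne', ENNReal.rpow_one]
    _ ≤ (2 ^ p * (ENNReal.ofReal c ^ p + ENNReal.ofReal c * G) * tailSup r a k ^ p) ^ (1 / p) := by
        gcongr
    _ = _ := by
        rw [ENNReal.mul_rpow_of_nonneg _ _ (by positivity), ← ENNReal.rpow_mul,
          mul_one_div_cancel hp.ne', ENNReal.rpow_one]

end pointwise

theorem stmt1_general (n : ℕ) (p : ℝ) (hp : 0 < p) (q : ℝ≥0∞) (hq : 0 < q)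
    (ε c : ℝ) (hε1 : ε < 1) :
    ∃ C : ℝ, 0 < C ∧
      ∀ (μ : ℤ → ℝ) (φ : Euc n → ℝ),
        (∀ k, 0 ≤ μ k) →
        ellq q (fun k => ENNReal.ofReal ((2:ℝ) ^ k * μ k)) < ∞ →
        Measurable φ → (∀ x, 0 ≤ φ x) →
        (∀ k₀ : ℤ, ∃ ψ η : Euc n → ℝ, Measurable ψ ∧ Measurable η ∧
          (∀ x, 0 ≤ ψ x) ∧ (∀ x, 0 ≤ η x) ∧ (∀ x, φ x ≤ ψ x + η x) ∧
          (distFn (eF ψ) ((2 : ℝ≥0∞) ^ k₀)) ^ (1/p) ≤ ENNReal.ofReal (c * μ k₀) ∧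
          ENNReal.ofReal ((2:ℝ) ^ ((k₀ : ℝ) * ε * p)) * distFn (eF η) ((2 : ℝ≥0∞) ^ k₀) ≤
            ENNReal.ofReal c *
              ∑' k : {k : ℤ // k₀ ≤ k},
                ENNReal.ofReal (((2:ℝ) ^ (((k : ℤ) : ℝ) * ε) * μ (k : ℤ)) ^ p)) →
        lorentzNorm p q (eF φ) < ∞ ∧
          lorentzNorm p q (eF φ) ≤
            ENNReal.ofReal C * ellq q (fun k => ENNReal.ofReal ((2:ℝ) ^ k * μ k)) := by
  set r : ℝ≥0∞ := 2 ^ (-(1 - ε) / 2)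
  have hr : r < 1 := ENNReal.rpow_lt_one_of_one_lt_of_neg one_lt_two (by linarith)
  obtain ⟨G, hG, hG_le⟩ := ellq_tailSup_le hq.ne' hr
  set K : ℝ≥0∞ :=
    (2 ^ p * (ENNReal.ofReal c ^ p + ENNReal.ofReal c * ∑' j : ℕ, (r ^ p) ^ j)) ^ (1 / p)
  have hK : K ≠ ∞ := by
    have hgeom := (tsum_geometric_lt_top.2 (ENNReal.rpow_lt_one hr hp)).ne
    exact ENNReal.rpow_ne_top_of_nonneg (by positivity) (by finiteness)
  refine ⟨(K * G).toReal + 1, by positivity, fun μ φ hμ ha_fin _ hφ hdec => ?_⟩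
  set a : ℤ → ℝ≥0∞ := fun k => ENNReal.ofReal ((2 : ℝ) ^ k * μ k)
  have hbound : lorentzNorm p q (eF φ) ≤ K * G * ellq q a :=
    calc lorentzNorm p q (eF φ)
        = ellq q (fun k : ℤ => (2 : ℝ≥0∞) ^ (k + 1) *
            distFn (eF φ) ((2 : ℝ≥0∞) ^ (k + 1)) ^ (1 / p)) :=
          (ellq_comp_add_right _ 1).symm
      _ ≤ ellq q (fun k => K * tailSup r a k) := ellq_mono fun k => by
          obtain ⟨ψ, η, -, -, -, -, hle, hψ, hη⟩ := hdec k
          exact lorentz_term_succ_le hp hμ hφ hle hψ hη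
      _ = K * ellq q (tailSup r a) := ellq_const_mul hq.ne' _ _
      _ ≤ K * G * ellq q a := by
          rw [mul_assoc]
          exact mul_le_mul_right (hG_le a) _
  have hKG : K * G ≤ ENNReal.ofReal ((K * G).toReal + 1) := by
    rw [← ENNReal.ofReal_toReal (by finiteness : K * G ≠ ∞)]
    exact ENNReal.ofReal_le_ofReal (by simp)
  exact ⟨hbound.trans_lt (by finiteness), hbound.trans (mul_le_mul_left hKG _)⟩

/-- The variant of Lemma 1.1 with `m(ψ_{k₀}, 2^{k₀})^{1/p} ≤ c μ_{k₀}`. -/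
theorem stmt1 (n : ℕ) (hn : 1 ≤ n) (p : ℝ) (hp : 0 < p) (q : ℝ≥0∞) (hq : 0 < q)
    (ε c : ℝ) (hε0 : 0 < ε) (hε1 : ε < 1) (hc : 0 < c) :
    ∃ C : ℝ, 0 < C ∧
      ∀ (μ : ℤ → ℝ) (φ : Euc n → ℝ),
        (∀ k, 0 ≤ μ k) →
        ellq q (fun k => ENNReal.ofReal ((2:ℝ) ^ k * μ k)) < ∞ →
        Measurable φ → (∀ x, 0 ≤ φ x) →
        (∀ k₀ : ℤ, ∃ ψ η : Euc n → ℝ, Measurable ψ ∧ Measurable η ∧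
          (∀ x, 0 ≤ ψ x) ∧ (∀ x, 0 ≤ η x) ∧ (∀ x, φ x ≤ ψ x + η x) ∧
          (distFn (eF ψ) ((2 : ℝ≥0∞) ^ k₀)) ^ (1/p) ≤ ENNReal.ofReal (c * μ k₀) ∧
          ENNReal.ofReal ((2:ℝ) ^ ((k₀ : ℝ) * ε * p)) * distFn (eF η) ((2 : ℝ≥0∞) ^ k₀) ≤
            ENNReal.ofReal c *
              ∑' k : {k : ℤ // k₀ ≤ k},
                ENNReal.ofReal (((2:ℝ) ^ (((k : ℤ) : ℝ) * ε) * μ (k : ℤ)) ^ p)) →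
        lorentzNorm p q (eF φ) < ∞ ∧
          lorentzNorm p q (eF φ) ≤
            ENNReal.ofReal C * ellq q (fun k => ENNReal.ofReal ((2:ℝ) ^ k * μ k)) :=
  stmt1_general n p hp q hq ε c hε1

end
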